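/- Let P, Q be pointed polyhedral sets in ℝ^n whose intersection F = P ∩ Q is a common face of both. Then for every p ∈ F, base_P(p) = base_Q(p), where base_R(p) denotes the unique point x in the convex hull of the vertices of R such that p = x + t·y for some t ≥ 0 and unit vector y ∈ char.cone(R) with t minimal. -/

import Mathlib

open scoped RealInnerProductSpace
open Set

noncomputable section

abbrev E (n : ℕ) := EuclideanSpace ℝ (Fin n)

/-- A polyhedral set: an intersection of finitely many closed half-spaces. -/
def IsPolyhedral {n : ℕ} (P : Set (E n)) : Prop :=
  ∃ (m : ℕ) (w : Fin m → E n) (b : Fin m → ℝ),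
    P = {x | ∀ i, ⟪w i, x⟫ + b i ≤ 0}

/-- The characteristic (recession) cone of `P`. -/
def charCone {n : ℕ} (P : Set (E n)) : Set (E n) := {y | ∀ x ∈ P, x + y ∈ P}

/-- The lineality space of `P`: `charCone P ∩ (−charCone P)`. -/
def linealitySpace {n : ℕ} (P : Set (E n)) : Set (E n) :=
  charCone P ∩ {y | -y ∈ charCone P}

/-- `P` is pointed if its lineality space is trivial. -/
def IsPointed {n : ℕ} (P : Set (E n)) : Prop := linealitySpace P = {0}

/-- `(w, b)` determines a supporting hyperplane of `P`. -/
def IsSupporting {n : ℕ} (w : E n) (b : ℝ) (P : Set (E n)) : Prop :=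
  w ≠ 0 ∧ (∀ x ∈ P, ⟪w, x⟫ + b ≤ 0) ∧ ∃ x ∈ P, ⟪w, x⟫ + b = 0

/-- A face of a polyhedral set: `∅`, `P` itself, or the intersection of `P` with a
supporting hyperplane. -/
def IsFace {n : ℕ} (P F : Set (E n)) : Prop :=
  F = ∅ ∨ F = P ∨ ∃ w b, IsSupporting w b P ∧ F = {x ∈ P | ⟪w, x⟫ + b = 0}

/-- A vertex (0-dimensional face) of `P`. -/
def IsVertex {n : ℕ} (P : Set (E n)) (v : E n) : Prop := IsFace P {v}

/-- `K_P`: the convex hull of the vertices of `P`. -/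
def Kpart {n : ℕ} (P : Set (E n)) : Set (E n) := convexHull ℝ {v | IsVertex P v}

/-- The set of admissible distances from `K_P` to `p` along unit directions of the
characteristic cone. -/
def deltaSet {n : ℕ} (P : Set (E n)) (p : E n) : Set ℝ :=
  {t : ℝ | 0 ≤ t ∧ ∃ x ∈ Kpart P, ∃ y ∈ charCone P, ‖y‖ = 1 ∧ p = x + t • y}

/-- `δ_P(p)`: the minimal distance from `K_P` to `p` along directions in the
characteristic cone. -/
def delta {n : ℕ} (P : Set (E n)) (p : E n) : ℝ := sInf (deltaSet P p)

/-! Faces of polyhedral sets are exposed, hence convex extreme subsets. If `p = x + t • y` with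
`x ∈ K_Q`, `y ∈ charCone Q` and `p` in the common face `F`, the whole ray `x + s • y` (`s ≥ 0`) lies
in `F`; so `x ∈ F` and `y ∈ charCone P`. Moreover `x` is a convex combination of vertices of `Q`
lying in `F`, and these are extreme points of `P`, hence vertices of `P` since `P` is polyhedral.
Thus every representation of `p` for `Q` is one for `P` and conversely, so `δ_P(p) = δ_Q(p)`.
Finally a minimal representation for `P` is unique: averaging two distinct unit directions gives,
by strict convexity of the Euclidean norm, a direction of norm `< 1`, nonzero because `P` is
pointed, and normalising it yields a shorter representation. -/

open Filter Topology

section Convexity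

variable {M : Type*} [AddCommGroup M] [Module ℝ M]

theorem IsExtreme.mem_convexHull_inter {A B S : Set M} (hAB : IsExtreme ℝ A B)
    (hA : Convex ℝ A) (hS : S ⊆ A) {x : M} (hx : x ∈ convexHull ℝ S) (hxB : x ∈ B) :
    x ∈ convexHull ℝ (S ∩ B) := by
  classical
  rw [convexHull_eq_union_convexHull_finite_subsets, mem_iUnion₂] at hx
  obtain ⟨t, htS, hxt⟩ := hx
  induction t using Finset.induction_on generalizing x with
  | empty => simp at hxt
  | insert a t _ ih =>
    rw [Finset.coe_insert, insert_subset_iff] at htS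
    obtain ⟨haS, htS⟩ := htS
    rcases t.eq_empty_or_nonempty with rfl | hne
    · obtain rfl : x = a := by simpa using hxt
      exact subset_convexHull ℝ _ ⟨haS, hxB⟩
    rw [Finset.coe_insert, convexHull_insert (by simpa using hne), mem_convexJoin] at hxt
    obtain ⟨a, rfl, z, hz, hxz⟩ := hxt
    rw [← insert_endpoints_openSegment] at hxz
    rcases hxz with rfl | rfl | hxz
    · exact subset_convexHull ℝ _ ⟨haS, hxB⟩
    · exact ih hxB htS hz
    · have hzA : z ∈ A := convexHull_min (htS.trans hS) hA hz
      have haB := hAB.left_mem_of_mem_openSegment (hS haS) hzA hxB hxz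
      have hzB := hAB.right_mem_of_mem_openSegment (hS haS) hzA hxB hxz
      exact (convex_convexHull ℝ _).segment_subset (subset_convexHull ℝ (S ∩ B) ⟨haS, haB⟩)
        (ih hzB htS hz) (openSegment_subset_segment _ _ _ hxz)

theorem IsExtreme.add_smul_mem {R F : Set M} (hRF : IsExtreme ℝ R F) (hF : Convex ℝ F)
    {x y : M} (hray : ∀ s : ℝ, 0 ≤ s → x + s • y ∈ R) {t : ℝ} (ht : 0 < t)
    (hxt : x + t • y ∈ F) {s : ℝ} (hs : 0 ≤ s) : x + s • y ∈ F := by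
  set S := 2 * t + s
  have hS : 0 < S := by positivity
  have hxS : x + t • y ∈ openSegment ℝ x (x + S • y) := by
    rw [openSegment_eq_image']
    refine ⟨t / S, ⟨by positivity, (div_lt_one hS).2 (by linarith)⟩, ?_⟩
    simp only [add_sub_cancel_left, smul_smul, div_mul_cancel₀ t hS.ne']
  have hxR : x ∈ R := by simpa using hray 0 le_rfl
  refine hF.segment_subset (hRF.left_mem_of_mem_openSegment hxR (hray S hS.le) hxt hxS)
    (hRF.right_mem_of_mem_openSegment hxR (hray S hS.le) hxt hxS) ?_
  rw [segment_eq_image']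
  refine ⟨s / S, ⟨by positivity, (div_le_one hS).2 (by linarith)⟩, ?_⟩
  simp only [add_sub_cancel_left, smul_smul, div_mul_cancel₀ s hS.ne']

end Convexity

section Polyhedra

variable {n : ℕ}

section CharCone

theorem add_mem_charCone {S : Set (E n)} {y₁ y₂ : E n} (h₁ : y₁ ∈ charCone S)
    (h₂ : y₂ ∈ charCone S) : y₁ + y₂ ∈ charCone S := fun x hx => by
  rw [← add_assoc]
  exact h₂ _ (h₁ x hx)

theorem add_nsmul_mem_of_mem_charCone {S : Set (E n)} {x y : E n} (hx : x ∈ S)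
    (hy : y ∈ charCone S) (k : ℕ) : x + k • y ∈ S := by
  induction k with
  | zero => simpa using hx
  | succ k ih =>
    rw [succ_nsmul, ← add_assoc]
    exact hy _ ih

theorem IsPointed.eq_zero_of_neg_mem_charCone {P : Set (E n)} (hP : IsPointed P) {y : E n}
    (hy : y ∈ charCone P) (hy' : -y ∈ charCone P) : y = 0 := by
  have hlin : y ∈ linealitySpace P := ⟨hy, hy'⟩
  rwa [hP] at hlin

end CharCone

section Polyhedral

def polyhedron {m : ℕ} (w : Fin m → E n) (b : Fin m → ℝ) : Set (E n) :=
  {x | ∀ i, ⟪w i, x⟫ + b i ≤ 0}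

variable {m : ℕ} {w : Fin m → E n} {b : Fin m → ℝ}

theorem isPolyhedral_iff {P : Set (E n)} :
    IsPolyhedral P ↔ ∃ (m : ℕ) (w : Fin m → E n) (b : Fin m → ℝ), P = polyhedron w b :=
  Iff.rfl

theorem inner_nonpos_of_forall_add_nsmul_mem {x y : E n}
    (h : ∀ k : ℕ, x + k • y ∈ polyhedron w b) (i : Fin m) : ⟪w i, y⟫ ≤ 0 := by
  by_contra! hpos
  obtain ⟨k, hk⟩ := exists_nat_gt (-(⟪w i, x⟫ + b i) / ⟪w i, y⟫)
  rw [div_lt_iff₀ hpos] at hk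
  have hk' := h k i
  rw [← Nat.cast_smul_eq_nsmul ℝ, inner_add_right, real_inner_smul_right] at hk'
  linarith

theorem IsPolyhedral.add_smul_mem {P : Set (E n)} (hP : IsPolyhedral P) {x y : E n}
    (hx : x ∈ P) (hy : y ∈ charCone P) {s : ℝ} (hs : 0 ≤ s) : x + s • y ∈ P := by
  obtain ⟨m, w, b, rfl⟩ := isPolyhedral_iff.1 hP
  intro i
  have hyi := inner_nonpos_of_forall_add_nsmul_mem (add_nsmul_mem_of_mem_charCone hx hy) i
  rw [inner_add_right, real_inner_smul_right]
  nlinarith [hx i]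

theorem IsPolyhedral.smul_mem_charCone {P : Set (E n)} (hP : IsPolyhedral P) {y : E n}
    (hy : y ∈ charCone P) {c : ℝ} (hc : 0 ≤ c) : c • y ∈ charCone P :=
  fun _ hx => hP.add_smul_mem hx hy hc

theorem IsPolyhedral.mem_charCone_of_forall_add_smul_mem {P : Set (E n)} (hP : IsPolyhedral P)
    {x y : E n} (hray : ∀ s : ℝ, 0 ≤ s → x + s • y ∈ P) : y ∈ charCone P := by
  obtain ⟨m, w, b, rfl⟩ := isPolyhedral_iff.1 hP
  have hyi := inner_nonpos_of_forall_add_nsmul_mem fun k => by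
    simpa only [Nat.cast_smul_eq_nsmul] using hray k k.cast_nonneg
  intro z hz i
  rw [inner_add_right]
  linarith [hz i, hyi i]

theorem IsPolyhedral.convex {P : Set (E n)} (hP : IsPolyhedral P) : Convex ℝ P := by
  obtain ⟨m, w, b, rfl⟩ := isPolyhedral_iff.1 hP
  have hP : polyhedron w b = ⋂ i, {x | ⟪w i, x⟫ ≤ -b i} := by
    ext x
    simp only [polyhedron, mem_ofPred_eq, mem_iInter, le_neg_iff_add_nonpos_right]
  rw [hP]
  exact convex_iInter fun i => convex_halfSpace_le (innerₛₗ ℝ (w i)).isLinear _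

theorem exists_pos_add_smul_mem_polyhedron {v d : E n} (hv : v ∈ polyhedron w b)
    (hd : ∀ i, ⟪w i, v⟫ + b i = 0 → ⟪w i, d⟫ = 0) :
    ∃ s : ℝ, 0 < s ∧ v + s • d ∈ polyhedron w b := by
  have hev : ∀ i, ∀ᶠ s : ℝ in 𝓝 0, ⟪w i, v + s • d⟫ + b i ≤ 0 := by
    intro i
    rcases (hv i).eq_or_lt with hi | hi
    · refine Eventually.of_forall fun s => ?_
      rw [inner_add_right, real_inner_smul_right, hd i hi]
      linarith
    · have hc : Continuous fun s : ℝ => ⟪w i, v + s • d⟫ + b i := by fun_prop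
      refine ((hc.tendsto 0).eventually (gt_mem_nhds ?_)).mono fun _ => le_of_lt
      simpa using hi
  obtain ⟨s, hs, hpos⟩ :=
    ((eventually_all.2 hev).filter_mono nhdsWithin_le_nhds |>.and self_mem_nhdsWithin).exists
      (f := 𝓝[>] (0 : ℝ))
  exact ⟨s, hpos, hs⟩

theorem eq_of_mem_extremePoints_polyhedron {v x : E n}
    (hv : v ∈ (polyhedron w b).extremePoints ℝ) (hx : x ∈ polyhedron w b)
    (htight : ∀ i, ⟪w i, v⟫ + b i = 0 → ⟪w i, x⟫ + b i = 0) : x = v := by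
  obtain ⟨s, hs, hmem⟩ := exists_pos_add_smul_mem_polyhedron (d := v - x) hv.1 fun i hi => by
    rw [inner_sub_right]
    linarith [htight i hi]
  have hseg : v ∈ openSegment ℝ x (v + s • (v - x)) := by
    refine ⟨s / (1 + s), 1 / (1 + s), by positivity, by positivity, by field_simp; ring, ?_⟩
    match_scalars <;> field_simp
    ring
  exact hv.2 hx hmem hseg

end Polyhedral

section Faces

theorem IsFace.isExposed {R F : Set (E n)} (hF : IsFace R F) : IsExposed ℝ R F := by
  rcases hF with rfl | rfl | ⟨w, b, ⟨-, hle, x₀, hx₀, hx₀b⟩, rfl⟩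
  · exact isExposed_empty
  · exact IsExposed.refl _
  · refine fun _ => ⟨innerSL ℝ w, ?_⟩
    ext x
    simp only [mem_ofPred_eq, innerSL_apply_apply]
    refine and_congr_right fun hx => ⟨fun h y hy => by linarith [hle y hy], fun h => ?_⟩
    exact le_antisymm (hle x hx) (by linarith [h x₀ hx₀])

theorem IsVertex.mem_extremePoints {R : Set (E n)} {v : E n} (hv : IsVertex R v) :
    v ∈ R.extremePoints ℝ :=
  isExtreme_singleton.1 (IsFace.isExposed hv).isExtreme

theorem IsPolyhedral.isVertex_of_mem_extremePoints {P : Set (E n)} (hP : IsPolyhedral P)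
    {v : E n} (hv : v ∈ P.extremePoints ℝ) : IsVertex P v := by
  classical
  obtain ⟨m, w, b, rfl⟩ := isPolyhedral_iff.1 hP
  -- The sum of the constraints active at `v` is a supporting functional that vanishes on `P`
  -- only at `v`.
  set I := Finset.univ.filter fun i => ⟪w i, v⟫ + b i = 0
  have hsum (x : E n) :
      ⟪∑ i ∈ I, w i, x⟫ + ∑ i ∈ I, b i = ∑ i ∈ I, (⟪w i, x⟫ + b i) := by
    rw [sum_inner, Finset.sum_add_distrib]
  have hv0 : ∑ i ∈ I, (⟪w i, v⟫ + b i) = 0 :=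
    Finset.sum_eq_zero fun i hi => (Finset.mem_filter.1 hi).2
  have hle (x : E n) (hx : x ∈ polyhedron w b) : ∑ i ∈ I, (⟪w i, x⟫ + b i) ≤ 0 :=
    Finset.sum_nonpos fun i _ => hx i
  have huniq (x : E n) (hx : x ∈ polyhedron w b) (hx0 : ∑ i ∈ I, (⟪w i, x⟫ + b i) = 0) :
      x = v :=
    eq_of_mem_extremePoints_polyhedron hv hx fun i hi =>
      (Finset.sum_eq_zero_iff_of_nonpos fun j _ => hx j).1 hx0 i (by simp [I, hi])
  by_cases hW : ∑ i ∈ I, w i = 0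
  · refine Or.inr (Or.inl (Subset.antisymm (singleton_subset_iff.2 hv.1) fun x hx => ?_))
    have hB : ∑ i ∈ I, b i = 0 := by simpa [hW] using (hsum v).trans hv0
    refine huniq x hx ((hsum x).symm.trans ?_)
    rw [hW, inner_zero_left, zero_add, hB]
  · refine Or.inr (Or.inr ⟨_, _, ⟨hW, fun x hx => (hsum x).trans_le (hle x hx), v, hv.1,
      (hsum v).trans hv0⟩, ?_⟩)
    ext x
    constructor
    · rintro rfl
      exact ⟨hv.1, (hsum x).trans hv0⟩
    · rintro ⟨hx, hx0⟩
      exact huniq x hx ((hsum x).symm.trans hx0)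

end Faces

section Base

def IsBaseRepr (R : Set (E n)) (p x : E n) (t : ℝ) : Prop :=
  x ∈ Kpart R ∧ ∃ y ∈ charCone R, ‖y‖ = 1 ∧ p = x + t • y

theorem delta_nonneg {P : Set (E n)} {p : E n} : 0 ≤ delta P p := by
  rcases eq_empty_or_nonempty (deltaSet P p) with h | h
  · rw [delta, h, Real.sInf_empty]
  · exact le_csInf h fun t ht => ht.1

theorem delta_le {P : Set (E n)} {p : E n} {t : ℝ} (h : t ∈ deltaSet P p) : delta P p ≤ t :=
  csInf_le ⟨0, fun _ hr => hr.1⟩ h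

theorem delta_le_mul_norm {P : Set (E n)} (hP : IsPolyhedral P) {p x y : E n} {t : ℝ}
    (hx : x ∈ Kpart P) (hy : y ∈ charCone P) (hy0 : y ≠ 0) (ht : 0 ≤ t) (hp : p = x + t • y) :
    delta P p ≤ t * ‖y‖ := by
  have hn : 0 < ‖y‖ := norm_pos_iff.2 hy0
  refine delta_le ⟨by positivity, x, hx, ‖y‖⁻¹ • y, hP.smul_mem_charCone hy (by positivity), ?_, ?_⟩
  · rw [norm_smul, norm_inv, norm_norm, inv_mul_cancel₀ hn.ne']
  · rw [hp, smul_smul, mul_assoc, mul_inv_cancel₀ hn.ne', mul_one]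

theorem Kpart_subset {P : Set (E n)} (hP : IsPolyhedral P) : Kpart P ⊆ P :=
  convexHull_min (fun _ hv => extremePoints_subset (IsVertex.mem_extremePoints hv)) hP.convex

theorem mem_Kpart_of_isFace {P Q F : Set (E n)} (hP : IsPolyhedral P) (hQ : IsPolyhedral Q)
    (hFP : IsFace P F) (hFQ : IsFace Q F) {x : E n} (hxQ : x ∈ Kpart Q) (hxF : x ∈ F) :
    x ∈ Kpart P := by
  have hvert : {v | IsVertex Q v} ∩ F ⊆ {v | IsVertex P v} := by
    rintro v ⟨hvQ, hvF⟩
    have hvF : IsExtreme ℝ F {v} :=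
      (isExtreme_singleton.2 (IsVertex.mem_extremePoints hvQ)).mono
        (IsFace.isExposed hFQ).subset (singleton_subset_iff.2 hvF)
    exact hP.isVertex_of_mem_extremePoints
      (isExtreme_singleton.1 ((IsFace.isExposed hFP).isExtreme.trans hvF))
  exact convexHull_mono hvert ((IsFace.isExposed hFQ).isExtreme.mem_convexHull_inter hQ.convex
    (fun _ hv => extremePoints_subset (IsVertex.mem_extremePoints hv)) hxQ hxF)

theorem IsBaseRepr.of_isFace {P Q F : Set (E n)} (hP : IsPolyhedral P) (hQ : IsPolyhedral Q)
    (hFP : IsFace P F) (hFQ : IsFace Q F) {p x : E n} {t : ℝ} (hpF : p ∈ F)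
    (hu : ∃ u ∈ charCone P, ‖u‖ = 1) (ht : 0 ≤ t) (h : IsBaseRepr Q p x t) :
    IsBaseRepr P p x t := by
  obtain ⟨hxK, y, hy, hyn, rfl⟩ := h
  rcases ht.eq_or_lt with rfl | ht
  · obtain ⟨u, hu, hun⟩ := hu
    rw [zero_smul, add_zero] at hpF
    exact ⟨mem_Kpart_of_isFace hP hQ hFP hFQ hxK hpF, u, hu, hun, by simp⟩
  · have hray (s : ℝ) (hs : 0 ≤ s) : x + s • y ∈ F :=
      (IsFace.isExposed hFQ).isExtreme.add_smul_mem ((IsFace.isExposed hFQ).convex hQ.convex)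
        (fun s hs => hQ.add_smul_mem (Kpart_subset hQ hxK) hy hs) ht hpF hs
    refine ⟨mem_Kpart_of_isFace hP hQ hFP hFQ hxK (by simpa using hray 0 le_rfl), y, ?_, hyn, rfl⟩
    exact hP.mem_charCone_of_forall_add_smul_mem fun s hs =>
      (IsFace.isExposed hFP).subset (hray s hs)

theorem IsBaseRepr.eq_of_delta {P : Set (E n)} (hP : IsPolyhedral P) (hPptd : IsPointed P)
    {p x₁ x₂ : E n} (h₁ : IsBaseRepr P p x₁ (delta P p)) (h₂ : IsBaseRepr P p x₂ (delta P p)) :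
    x₁ = x₂ := by
  obtain ⟨hx₁, y₁, hy₁, hy₁n, hp₁⟩ := h₁
  obtain ⟨hx₂, y₂, hy₂, hy₂n, hp₂⟩ := h₂
  set t := delta P p
  suffices t • y₁ = t • y₂ by
    rw [hp₁, this] at hp₂
    exact add_right_cancel hp₂
  have ht0 : 0 ≤ t := delta_nonneg
  rcases ht0.eq_or_lt with h0 | ht
  · rw [← h0, zero_smul, zero_smul]
  congr 1
  by_contra hne
  set y := (1 / 2 : ℝ) • (y₁ + y₂) with hy_def
  have hlt : ‖y‖ < 1 := hy₁n ▸ (norm_midpoint_lt_iff (hy₁n.trans hy₂n.symm)).2 hne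
  have hy0 : y ≠ 0 := by
    intro hy0
    have hneg : y₂ = -y₁ := by
      rw [hy_def, smul_eq_zero] at hy0
      exact eq_neg_of_add_eq_zero_right (hy0.resolve_left (by norm_num))
    rw [hPptd.eq_zero_of_neg_mem_charCone hy₁ (hneg ▸ hy₂), norm_zero] at hy₁n
    exact zero_ne_one hy₁n
  have hp : p = (1 / 2 : ℝ) • x₁ + (1 / 2 : ℝ) • x₂ + t • y := by
    calc p = (1 / 2 : ℝ) • ((x₁ + t • y₁) + (x₂ + t • y₂)) := by rw [← hp₁, ← hp₂]; module
      _ = _ := by rw [hy_def]; module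
  have hx : (1 / 2 : ℝ) • x₁ + (1 / 2 : ℝ) • x₂ ∈ Kpart P :=
    convex_convexHull ℝ _ hx₁ hx₂ (by norm_num) (by norm_num) (by norm_num)
  have hle : t ≤ t * ‖y‖ := delta_le_mul_norm hP hx
    (hP.smul_mem_charCone (add_mem_charCone hy₁ hy₂) (by norm_num)) hy0 ht.le hp
  nlinarith

end Base

end Polyhedra

theorem base_eq_on_common_face_general {n : ℕ} (Pset Qset : Set (E n))
    (hP : IsPolyhedral Pset) (hQ : IsPolyhedral Qset)
    (hPptd : IsPointed Pset)
    (hFP : IsFace Pset (Pset ∩ Qset)) (hFQ : IsFace Qset (Pset ∩ Qset))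
    (p : E n) (hp : p ∈ Pset ∩ Qset) :
    ∀ x₁ ∈ Kpart Pset, ∀ x₂ ∈ Kpart Qset,
      (∃ y ∈ charCone Pset, ‖y‖ = 1 ∧ p = x₁ + delta Pset p • y) →
      (∃ y ∈ charCone Qset, ‖y‖ = 1 ∧ p = x₂ + delta Qset p • y) →
      x₁ = x₂ := by
  rintro x₁ hx₁ x₂ hx₂ ⟨y₁, hy₁, hy₁n, hp₁⟩ ⟨y₂, hy₂, hy₂n, hp₂⟩
  have h₁ : IsBaseRepr Pset p x₁ (delta Pset p) := ⟨hx₁, y₁, hy₁, hy₁n, hp₁⟩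
  have h₂ : IsBaseRepr Qset p x₂ (delta Qset p) := ⟨hx₂, y₂, hy₂, hy₂n, hp₂⟩
  have h₁Q := h₁.of_isFace hQ hP hFQ hFP hp ⟨y₂, hy₂, hy₂n⟩ delta_nonneg
  have h₂P := h₂.of_isFace hP hQ hFP hFQ hp ⟨y₁, hy₁, hy₁n⟩ delta_nonneg
  have hδ : delta Qset p = delta Pset p :=
    le_antisymm (delta_le ⟨delta_nonneg, x₁, h₁Q⟩) (delta_le ⟨delta_nonneg, x₂, h₂P⟩)
  exact h₁.eq_of_delta hP hPptd (hδ ▸ h₂P)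

/-- If two pointed polyhedral sets intersect in a common face F, their base maps
agree at every point of F. -/
theorem base_eq_on_common_face {n : ℕ} (Pset Qset : Set (E n))
    (hP : IsPolyhedral Pset) (hQ : IsPolyhedral Qset)
    (hPptd : IsPointed Pset) (hQptd : IsPointed Qset)
    (hFP : IsFace Pset (Pset ∩ Qset)) (hFQ : IsFace Qset (Pset ∩ Qset))
    (p : E n) (hp : p ∈ Pset ∩ Qset) :
    ∀ x₁ ∈ Kpart Pset, ∀ x₂ ∈ Kpart Qset,
      (∃ y ∈ charCone Pset, ‖y‖ = 1 ∧ p = x₁ + delta Pset p • y) →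
      (∃ y ∈ charCone Qset, ‖y‖ = 1 ∧ p = x₂ + delta Qset p • y) →
      x₁ = x₂ :=
  base_eq_on_common_face_general Pset Qset hP hQ hPptd hFP hFQ p hp
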